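/- Let Z be a nonempty finite type, P : Z → Z → ℝ a row-stochastic matrix that is irreducible, and W ⊆ Z with at least two elements. Then for every a ∈ W, ∑_{b ∈ W, b ≠ a} P(R^W_{a,b}) = 1; that is, the factor-chain transition matrix P̄ on W is row-stochastic. -/

import Mathlib

open scoped Classical

/-- Probability of a path `x = (x₀, …, x_m)` of length `m`:
`Prob(x) = ∏_{i=1}^m P(x_{i-1}, x_i)`. -/
def pathProb {Z : Type*} (P : Z → Z → ℝ) {m : ℕ} (x : Fin (m + 1) → Z) : ℝ :=
  ∏ i : Fin m, P (x i.castSucc) (x i.succ)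

/-- `P` is a row-stochastic matrix. -/
def RowStochastic {Z : Type*} [Fintype Z] (P : Z → Z → ℝ) : Prop :=
  (∀ a b, 0 ≤ P a b) ∧ ∀ a, ∑ b, P a b = 1

/-- The chain is irreducible: for all `a b` there is `m ≥ 1` with `(P^m)(a,b) > 0`. -/
def IsIrreducibleChain {Z : Type*} [Fintype Z] [DecidableEq Z] (P : Z → Z → ℝ) : Prop :=
  ∀ a b : Z, ∃ m : ℕ, 1 ≤ m ∧ 0 < (Matrix.of P ^ m) a b

/-- The probability `P(R^W_{a,b})` of the set of `W`-arrows from `a` to `b`: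
the sum over all lengths `m ≥ 1` of the probabilities of paths `x` of length `m`
with `x₀ = a`, `x_m = b`, and `x_i ∈ W → x_i = a` for every `i < m`. -/
noncomputable def arrowProb {Z : Type*} [Fintype Z] (P : Z → Z → ℝ) (W : Finset Z)
    (a b : Z) : ℝ :=
  ∑' m : ℕ, ∑ x ∈ Finset.univ.filter (fun x : Fin (m + 1 + 1) → Z =>
      x 0 = a ∧ x (Fin.last (m + 1)) = b ∧
      ∀ i : Fin (m + 1 + 1), i < Fin.last (m + 1) → x i ∈ W → x i = a),
    pathProb P x

/-!
Let `B = W \ {a}` and let `K` be `P` with the rows indexed by `B` replaced by zero (the chain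
killed once it has entered `B`). The `K`-probability of a path from `a` is its `P`-probability if
the path is a `W`-arrow and `0` otherwise, so `P(R^W_{a,b}) = ∑_{m ≥ 1} K^m(a,b)`. Writing
`s n = (K^n 1)(a)` for the mass still alive after `n` steps, `∑_{b ∈ B} K^{m+1}(a,b)` telescopes
as `s (m+1) - s (m+2)` and `s 1 = 1`, so the claim reduces to `s n → 0`. By irreducibility every
state reaches `B`, so some power `K^k` has all row sums at most `c < 1`, and the surviving mass
contracts by the factor `c` every `k` steps.
-/

open Filter Topology Finset Matrix

lemma sum_tsum_eq_of_hasSum_sum_of_nonneg {ι : Type*} {s : Finset ι} {f : ℕ → ι → ℝ} {r : ℝ}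
    (hf : ∀ m i, 0 ≤ f m i) (h : HasSum (fun m => ∑ i ∈ s, f m i) r) :
    ∑ i ∈ s, ∑' m, f m i = r := by
  have hsummable : ∀ i ∈ s, Summable fun m => f m i := fun i hi =>
    h.summable.of_nonneg_of_le (fun m => hf m i)
      fun m => single_le_sum (f := f m) (fun j _ => hf m j) hi
  rw [← Summable.tsum_finsetSum hsummable, h.tsum_eq]

section

variable {Z : Type*}

lemma pathProb_cons (P : Z → Z → ℝ) {n : ℕ} (c : Z) (y : Fin (n + 1) → Z) :
    pathProb P (Fin.cons c y : Fin (n + 1 + 1) → Z) = P c (y 0) * pathProb P y := by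
  simp only [pathProb, Fin.prod_univ_succ, Fin.castSucc_zero, Fin.cons_zero, ← Fin.succ_castSucc,
    Fin.cons_succ]

lemma mulVec_mono_of_nonneg [Fintype Z] {M : Matrix Z Z ℝ} (hM : ∀ i j, 0 ≤ M i j)
    {v w : Z → ℝ} (hvw : v ≤ w) : M *ᵥ v ≤ M *ᵥ w := fun i =>
  sum_le_sum fun j _ => mul_le_mul_of_nonneg_left (hvw j) (hM i j)

lemma mulVec_nonneg_of_nonneg [Fintype Z] {M : Matrix Z Z ℝ} (hM : ∀ i j, 0 ≤ M i j)
    {v : Z → ℝ} (hv : 0 ≤ v) : 0 ≤ M *ᵥ v := by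
  simpa using mulVec_mono_of_nonneg hM hv

variable [DecidableEq Z]

def killedOn (P : Z → Z → ℝ) (B : Finset Z) (x y : Z) : ℝ :=
  if x ∈ B then 0 else P x y

lemma killedOn_nonneg {P : Z → Z → ℝ} {B : Finset Z} (hP : ∀ a b, 0 ≤ P a b) (x y : Z) :
    0 ≤ killedOn P B x y := by
  unfold killedOn; split_ifs <;> simp [hP]

lemma killedOn_le {P : Z → Z → ℝ} {B : Finset Z} (hP : ∀ a b, 0 ≤ P a b) (x y : Z) :
    killedOn P B x y ≤ P x y := by
  unfold killedOn; split_ifs <;> simp [hP]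

lemma pathProb_killedOn (P : Z → Z → ℝ) (B : Finset Z) {m : ℕ} (x : Fin (m + 1) → Z) :
    pathProb (killedOn P B) x = if ∀ i < Fin.last m, x i ∉ B then pathProb P x else 0 := by
  split_ifs with hx
  · refine prod_congr rfl fun i _ => ?_
    simp [killedOn, hx _ (Fin.castSucc_lt_last i)]
  · push Not at hx
    obtain ⟨i, hi, hiB⟩ := hx
    obtain ⟨j, rfl⟩ := Fin.exists_castSucc_eq.2 hi.ne
    exact prod_eq_zero (mem_univ j) (by simp [killedOn, hiB])

variable [Fintype Z]

theorem sum_pathProb_eq_pow_apply (P : Z → Z → ℝ) (n : ℕ) (a b : Z) :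
    ∑ x : Fin (n + 1) → Z, (if x 0 = a ∧ x (Fin.last n) = b then pathProb P x else 0) =
      (of P ^ n) a b := by
  induction n generalizing a with
  | zero =>
    rw [← (Equiv.funUnique (Fin 1) Z).symm.sum_comp]
    rcases eq_or_ne a b with rfl | hab <;> simp [pathProb, *]
  | succ n ih =>
    rw [← (Fin.consEquiv fun _ => Z).sum_comp, Fintype.sum_prod_type, pow_succ', mul_apply]
    simp only [← ih, of_apply, mul_sum, mul_ite, mul_zero]
    conv_lhs => rw [sum_comm]
    conv_rhs => rw [sum_comm]
    refine sum_congr rfl fun y _ => ?_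
    simp [Fin.consEquiv, ← Fin.succ_last, pathProb_cons, ite_and]

theorem arrowProb_eq_tsum_pow_killedOn (P : Z → Z → ℝ) (W : Finset Z) (a b : Z) :
    arrowProb P W a b = ∑' m, (of (killedOn P (W.erase a)) ^ (m + 1)) a b := by
  refine tsum_congr fun m => ?_
  rw [← sum_pathProb_eq_pow_apply, sum_filter]
  refine sum_congr rfl fun x _ => ?_
  simp only [pathProb_killedOn, mem_erase, not_and, not_imp_not, ite_and]
  split_ifs <;> simp_all

lemma pow_apply_le_pow_apply {M N : Matrix Z Z ℝ} (hM : ∀ i j, 0 ≤ M i j)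
    (hMN : ∀ i j, M i j ≤ N i j) (k : ℕ) (i j : Z) : (M ^ k) i j ≤ (N ^ k) i j := by
  induction k generalizing i j with
  | zero => rfl
  | succ k ih =>
    rw [pow_succ, pow_succ, mul_apply, mul_apply]
    exact sum_le_sum fun l _ => mul_le_mul (ih i l) (hMN l j) (hM l j)
      (pow_apply_nonneg (fun a b => (hM a b).trans (hMN a b)) k i l)

theorem tendsto_pow_mulVec_one_nhds_zero {M : Matrix Z Z ℝ} (hM : ∀ i j, 0 ≤ M i j)
    (hsub : M *ᵥ 1 ≤ 1) (hleak : ∀ i, ∃ k, (M ^ k *ᵥ 1) i < 1) (i : Z) :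
    Tendsto (fun n => (M ^ n *ᵥ 1) i) atTop (𝓝 0) := by
  set u : ℕ → Z → ℝ := fun n => M ^ n *ᵥ 1 with hu
  have hpow := pow_apply_nonneg hM
  have hu_nonneg n : 0 ≤ u n := mulVec_nonneg_of_nonneg (hpow n) zero_le_one
  have hu_add n k : u (n + k) = M ^ n *ᵥ u k := by simp [hu, pow_add, mulVec_mulVec]
  have hu_anti : Antitone u := antitone_nat_of_succ_le fun n => by
    rw [hu_add]
    simpa [hu] using mulVec_mono_of_nonneg (hpow n) hsub
  choose k hk using hleak
  set K := univ.sup k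
  have : Nonempty Z := ⟨i⟩
  obtain ⟨z, hz⟩ := Finite.exists_max (u K)
  have hc : u K z < 1 := (hu_anti (le_sup (mem_univ z)) z).trans_lt (hk z)
  have hcontract n : u (n + K) i ≤ u K z * u n i := by
    calc u (n + K) i = (M ^ n *ᵥ u K) i := by rw [hu_add]
      _ ≤ (M ^ n *ᵥ (u K z • 1)) i :=
        mulVec_mono_of_nonneg (hpow n) (fun j => by simpa using hz j) i
      _ = u K z * u n i := by simp [hu, mulVec_smul]
  obtain ⟨L, hL⟩ : ∃ L, Tendsto (fun n => u n i) atTop (𝓝 L) :=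
    ⟨_, tendsto_atTop_ciInf (fun m n h => hu_anti h i) ⟨0, by
      rintro _ ⟨n, rfl⟩; exact hu_nonneg n i⟩⟩
  have hL_nonneg : 0 ≤ L := ge_of_tendsto' hL fun n => hu_nonneg n i
  have hL_le : L ≤ u K z * L :=
    le_of_tendsto_of_tendsto' (hL.comp (tendsto_add_atTop_nat K)) (hL.const_mul _) hcontract
  obtain rfl : L = 0 := by nlinarith
  exact hL

variable {P : Z → Z → ℝ} {B : Finset Z}

lemma pow_killedOn_apply_nonneg (hP : ∀ a b, 0 ≤ P a b) (k : ℕ) (x y : Z) :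
    0 ≤ (of (killedOn P B) ^ k) x y :=
  pow_apply_nonneg (killedOn_nonneg hP) k x y

lemma killedOn_mulVec_one (hP : ∀ a, ∑ b, P a b = 1) :
    of (killedOn P B) *ᵥ 1 = fun x => if x ∈ B then 0 else 1 := by
  ext x
  unfold killedOn; split_ifs <;> simp [mulVec, dotProduct, *]

lemma exists_pow_killedOn_mulVec_one_lt (hP : RowStochastic P) (hirr : IsIrreducibleChain P)
    {b : Z} (hb : b ∈ B) (z : Z) : ∃ k, (of (killedOn P B) ^ k *ᵥ 1) z < 1 := by
  obtain ⟨m, -, hm⟩ := hirr z b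
  have hstoch : of P ^ m ∈ rowStochastic ℝ Z := pow_mem (mem_rowStochastic_iff_sum.2 hP) m
  set v := of (killedOn P B) *ᵥ 1
  have hv_nonneg : 0 ≤ v := mulVec_nonneg_of_nonneg (killedOn_nonneg hP.1) zero_le_one
  have hv_le : v ≤ 1 - Pi.single b 1 := fun j => by
    rcases eq_or_ne j b with rfl | hj <;> simp [v, killedOn_mulVec_one hP.2, *]
    split_ifs <;> simp
  refine ⟨m + 1, ?_⟩
  calc (of (killedOn P B) ^ (m + 1) *ᵥ 1) z = (of (killedOn P B) ^ m *ᵥ v) z := by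
        rw [pow_succ, ← mulVec_mulVec]
    _ ≤ (of P ^ m *ᵥ v) z := sum_le_sum fun j _ => mul_le_mul_of_nonneg_right
        (pow_apply_le_pow_apply (killedOn_nonneg hP.1) (killedOn_le hP.1) m z j) (hv_nonneg j)
    _ ≤ (of P ^ m *ᵥ (1 - Pi.single b 1)) z :=
        mulVec_mono_of_nonneg (fun _ _ => nonneg_of_mem_rowStochastic hstoch) hv_le z
    _ = 1 - (of P ^ m) z b := by
        simp [mulVec_sub, one_vecMul_of_mem_rowStochastic hstoch, mulVec_single]
    _ < 1 := sub_lt_self 1 hm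

lemma sum_pow_killedOn_apply_eq_sub (hP : ∀ a, ∑ b, P a b = 1) (a : Z) (m : ℕ) :
    ∑ b ∈ B, (of (killedOn P B) ^ (m + 1)) a b =
      (of (killedOn P B) ^ (m + 1) *ᵥ 1) a - (of (killedOn P B) ^ (m + 2) *ᵥ 1) a := by
  rw [pow_succ _ (m + 1), ← mulVec_mulVec, killedOn_mulVec_one hP, eq_sub_iff_add_eq]
  simp only [mulVec, dotProduct, Pi.one_apply, mul_one, mul_ite, mul_zero]
  rw [sum_ite, sum_const_zero, zero_add, ← sum_add_sum_compl B]
  congr 2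
  ext; simp

theorem hasSum_sum_pow_killedOn_apply (hP : RowStochastic P) (hirr : IsIrreducibleChain P)
    (hB : B.Nonempty) {a : Z} (ha : a ∉ B) :
    HasSum (fun m => ∑ b ∈ B, (of (killedOn P B) ^ (m + 1)) a b) 1 := by
  obtain ⟨b, hb⟩ := hB
  set s : ℕ → ℝ := fun n => (of (killedOn P B) ^ n *ᵥ 1) a
  have hsub : of (killedOn P B) *ᵥ 1 ≤ 1 := fun x => by
    simp only [killedOn_mulVec_one hP.2, Pi.one_apply]; split_ifs <;> simp
  have hs : Tendsto s atTop (𝓝 0) := tendsto_pow_mulVec_one_nhds_zero (killedOn_nonneg hP.1)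
    hsub (exists_pow_killedOn_mulVec_one_lt hP hirr hb) a
  have hs_one : s 1 = 1 := by simp [s, killedOn_mulVec_one hP.2, ha]
  rw [hasSum_iff_tendsto_nat_of_nonneg
    (fun m => sum_nonneg fun b _ => pow_killedOn_apply_nonneg hP.1 _ _ _)]
  simp_rw [sum_pow_killedOn_apply_eq_sub hP.2]
  change Tendsto (fun n => ∑ i ∈ range n, (s (i + 1) - s (i + 1 + 1))) atTop (𝓝 1)
  simp_rw [sum_range_sub' (fun n => s (n + 1))]
  simpa [hs_one] using (hs.comp (tendsto_add_atTop_nat 1)).const_sub 1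

end

theorem stmt_7_general {Z : Type*} [Fintype Z] [DecidableEq Z] (P : Z → Z → ℝ)
    (hP : RowStochastic P) (hirr : IsIrreducibleChain P)
    (W : Finset Z) (hW : 2 ≤ W.card) (a : Z) (ha : a ∈ W) :
    ∑ b ∈ W.erase a, arrowProb P W a b = 1 := by
  have hB : (W.erase a).Nonempty := by rw [← card_pos, card_erase_of_mem ha]; omega
  simp_rw [arrowProb_eq_tsum_pow_killedOn]
  exact sum_tsum_eq_of_hasSum_sum_of_nonneg (fun m b => pow_killedOn_apply_nonneg hP.1 _ _ _)
    (hasSum_sum_pow_killedOn_apply hP hirr hB (notMem_erase a W))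

theorem stmt_7 {Z : Type*} [Fintype Z] [Nonempty Z] [DecidableEq Z] (P : Z → Z → ℝ)
    (hP : RowStochastic P) (hirr : IsIrreducibleChain P)
    (W : Finset Z) (hW : 2 ≤ W.card) (a : Z) (ha : a ∈ W) :
    ∑ b ∈ W.erase a, arrowProb P W a b = 1 :=
  stmt_7_general P hP hirr W hW a ha
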